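/- arXiv:2311.05340 — 4 statements merged into one kernel-verified Lean document; each statement's English description precedes it below -/
import Mathlib

section
/- Let M be a matroid on ground set [n] of rank k−r, where 0 ≤ r ≤ k < n. Then M is a quotient of the uniform matroid U_{k,n} if and only if every k-element subset A ⊆ [n] satisfies rk_M(A) = k−r. -/
open Finset

attribute [local instance] Classical.propDecidable

noncomputable section

/-- A matroid on `Fin n`, presented by its collection of bases (basis exchange axiom). -/
structure FinMatroid (n : ℕ) where
  bases : Finset (Finset (Fin n))
  bases_nonempty : bases.Nonempty
  exchange : ∀ B₁ ∈ bases, ∀ B₂ ∈ bases, ∀ x ∈ B₁ \ B₂,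
      ∃ y ∈ B₂ \ B₁, insert y (B₁.erase x) ∈ bases

/-- Rank function associated to a collection of bases: `rk S = max |S ∩ B|`. -/
def rkOf {n : ℕ} (Bs : Finset (Finset (Fin n))) (S : Finset (Fin n)) : ℕ :=
  Bs.sup fun B => (S ∩ B).card

/-- Rank function of a matroid. -/
def rk {n : ℕ} (M : FinMatroid n) (S : Finset (Fin n)) : ℕ := rkOf M.bases S

/-- Independence w.r.t. a collection of bases. -/
def Indep {n : ℕ} (Bs : Finset (Finset (Fin n))) (S : Finset (Fin n)) : Prop :=
  ∃ B ∈ Bs, S ⊆ B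

/-- A circuit: a dependent set all of whose proper subsets are independent. -/
def IsCircuit {n : ℕ} (Bs : Finset (Finset (Fin n))) (C : Finset (Fin n)) : Prop :=
  ¬ Indep Bs C ∧ ∀ D ⊆ C, D ≠ C → Indep Bs D

/-- `M` is a quotient of `N`: every circuit of `N` is a union of circuits of `M`. -/
def IsQuotient {n : ℕ} (BsM BsN : Finset (Finset (Fin n))) : Prop :=
  ∀ C, IsCircuit BsN C → ∃ 𝒟 : Finset (Finset (Fin n)),
    (∀ D ∈ 𝒟, IsCircuit BsM D) ∧ C = 𝒟.sup id

/-- The values of a finset under the key `f`, sorted increasingly. -/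
def sortedVals {n : ℕ} (f : Fin n → ℕ) (A : Finset (Fin n)) : List ℕ :=
  (A.image f).sort (· ≤ ·)

/-- Gale order (w.r.t. the total order on `Fin n` given by an injective key `f`):
`A ≤ B` iff the `i`-th smallest element of `A` is `≤` the `i`-th smallest element of `B`. -/
def galeLE {n : ℕ} (f : Fin n → ℕ) (A B : Finset (Fin n)) : Prop :=
  List.Forall₂ (· ≤ ·) (sortedVals f A) (sortedVals f B)

/-- Position of `a` in the cyclic order starting at `i` (so `cpos i i = 0`). -/
def cpos {n : ℕ} (i a : Fin n) : ℕ := ((a - i : Fin n) : ℕ)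

/-- Cyclic half-open interval `(a, b]`; in particular `(a, a] = ∅`. -/
def cycIoc {n : ℕ} (a b : Fin n) : Finset (Fin n) :=
  Finset.univ.filter fun x => cpos a x ≠ 0 ∧ cpos a x ≤ cpos a b

/-- Cyclic closed interval `[a, b]`. -/
def cycIcc {n : ℕ} (a b : Fin n) : Finset (Fin n) :=
  Finset.univ.filter fun x => cpos a x ≤ cpos a b

/-- A decorated permutation: a permutation together with a coloring in `{0, ±1}`
whose zero set is exactly the set of non-fixed points. -/
structure DecoratedPerm (n : ℕ) where
  perm : Equiv.Perm (Fin n)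
  col : Fin n → ℤ
  col_range : ∀ i, col i = 0 ∨ col i = 1 ∨ col i = -1
  col_zero_iff : ∀ i, col i = 0 ↔ perm i ≠ i

/-- Grassmann necklace term `I_i = {a : a <_i π⁻¹(a) or col a = -1}`. -/
def neck {n : ℕ} (π : DecoratedPerm n) (i : Fin n) : Finset (Fin n) :=
  Finset.univ.filter fun a => cpos i a < cpos i (π.perm.symm a) ∨ π.col a = -1

/-- Grassmann conecklace term `J_i = π⁻¹(I_i)`. -/
def coneck {n : ℕ} (π : DecoratedPerm n) (i : Fin n) : Finset (Fin n) :=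
  (neck π i).image π.perm.symm

/-- Rank of a decorated permutation: the common size of its necklace terms. -/
def drank {n : ℕ} (π : DecoratedPerm n) : ℕ :=
  if h : 0 < n then (neck π ⟨0, h⟩).card else 0

/-- Grassmann interval `S^π_i = (π⁻¹(i), i]`, with the coloop convention `[n]`
(the loop convention `∅` is automatic since `(i, i] = ∅`). -/
def SInt {n : ℕ} (π : DecoratedPerm n) (i : Fin n) : Finset (Fin n) :=
  if π.col i = -1 then Finset.univ else cycIoc (π.perm.symm i) i

/-- Shift interval `S^{π,σ}_i = (π⁻¹(i), σ⁻¹(i)]`, with the convention `[n]` when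
`i` is a loop of `π` and a coloop of `σ`. -/
def shiftInt {n : ℕ} (π σ : DecoratedPerm n) (i : Fin n) : Finset (Fin n) :=
  if π.col i = 1 ∧ σ.col i = -1 then Finset.univ
  else cycIoc (π.perm.symm i) (σ.perm.symm i)

/-- CW-arrow starting at `i`: the cyclic interval from `i` to `π(i)` (all of `[n]` for coloops). -/
def cwArrow {n : ℕ} (π : DecoratedPerm n) (i : Fin n) : Finset (Fin n) :=
  if π.col i = -1 then Finset.univ
  else Finset.univ.filter fun j => cpos i j ≤ cpos i (π.perm i)

/-- The CW-function: the number of CW-arrows contained in `A` (for `A ≠ [n]`),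
and `n - rk(M)` for `A = [n]`. -/
def cw {n : ℕ} (π : DecoratedPerm n) (A : Finset (Fin n)) : ℕ :=
  if A = Finset.univ then n - drank π
  else (Finset.univ.filter fun i => cwArrow π i ⊆ A).card

/-- Bases of the positroid associated with a decorated permutation: sets that are
above every necklace term in the corresponding cyclic Gale order. -/
def positroidBases {n : ℕ} (π : DecoratedPerm n) : Finset (Finset (Fin n)) :=
  Finset.univ.filter fun B => ∀ i, galeLE (cpos i) (neck π i) B

/-- `σ` is the cyclic shift `ρ_A(π)`: positions in `A` are frozen; at a position
`i ∉ A` the new value is `π(j)` where `j` is the maximum of `Aᶜ` in the cyclic order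
starting at `i`; new fixed points are decorated as loops. -/
def IsCyclicShift {n : ℕ} (π σ : DecoratedPerm n) (A : Finset (Fin n)) : Prop :=
  (∀ i ∈ A, σ.perm i = π.perm i ∧ σ.col i = π.col i) ∧
  (∀ i ∉ A, ∃ j, j ∉ A ∧ (∀ j', j' ∉ A → cpos i j' ≤ cpos i j) ∧ σ.perm i = π.perm j) ∧
  (∀ i ∉ A, σ.col i = if σ.perm i = i then 1 else 0)

/-- The shift intervals `S^{π,σ}_i` partition `[n]`. -/
def ShiftPartition {n : ℕ} (π σ : DecoratedPerm n) : Prop :=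
  (∀ i j : Fin n, i ≠ j → Disjoint (shiftInt π σ i) (shiftInt π σ j)) ∧
  Finset.univ.biUnion (shiftInt π σ) = Finset.univ

/-- `C` is a cyclic component of `A`: a maximal cyclic interval contained in `A`. -/
def IsCycComponent {n : ℕ} [NeZero n] (A C : Finset (Fin n)) : Prop :=
  ∃ a b : Fin n, C = cycIcc a b ∧ C ⊆ A ∧ (a - 1) ∉ A ∧ (b + 1) ∉ A

/-- Bases of the lattice path matroid `M[U, L]`. -/
def lpmBases {n : ℕ} (U L : Finset (Fin n)) : Finset (Finset (Fin n)) :=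
  Finset.univ.filter fun B => galeLE Fin.val U B ∧ galeLE Fin.val B L
end

/-!
Regard `M` as a `Matroid (Fin n)`. A set is a union of circuits exactly when each of
its elements lies in the closure of the others, and the circuits of `U_{k,n}` are the
`(k+1)`-sets. So `M` is a quotient of `U_{k,n}` iff for every `(k+1)`-set `C` and `x ∈ C`, `x` is
spanned by the `k`-set `C \ {x}`. This holds when all `k`-sets span `M`; conversely, if a `k`-set
`A` does not span, an element `x` outside its closure makes `A ∪ {x}` fail the condition.
Finally, a set spans `M` iff its rank is `rk M = k - r`.
-/

namespace Matroid

variable {α : Type*} (N : Matroid α)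

def IsCyclic (C : Set α) : Prop :=
  ∀ e ∈ C, ∃ D ⊆ C, N.IsCircuit D ∧ e ∈ D

lemma isCyclic_iff_forall_mem_closure {C : Set α} :
    N.IsCyclic C ↔ ∀ e ∈ C, e ∈ N.closure (C \ {e}) := by
  refine forall₂_congr fun e he => ?_
  rw [mem_closure_iff_exists_isCircuit (fun h => h.2 rfl), Set.insert_sdiff_singleton,
    Set.insert_eq_of_mem he]

theorem forall_isCyclic_iff_forall_spanning [DecidableEq α] (k : ℕ) :
    (∀ C : Finset α, ↑C ⊆ N.E → C.card = k + 1 → N.IsCyclic C) ↔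
      ∀ A : Finset α, ↑A ⊆ N.E → A.card = k → N.Spanning A := by
  simp only [isCyclic_iff_forall_mem_closure]
  constructor
  · intro hcyc A hAE hA
    by_contra hA_span
    obtain ⟨e, heE, heA⟩ :=
      Set.exists_of_ssubset ((N.not_spanning_iff_closure_ssubset hAE).1 hA_span)
    have heA' : e ∉ A := fun h => heA (N.subset_closure _ hAE h)
    have hecl := hcyc (insert e A) (by simpa [Set.insert_subset_iff] using ⟨heE, hAE⟩)
      (by rw [Finset.card_insert_of_notMem heA', hA]) e (by simp)
    rw [Finset.coe_insert, Set.insert_sdiff_self_of_notMem heA'] at hecl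
    exact heA hecl
  · intro hspan C hCE hC e he
    rw [← Finset.coe_erase, (hspan _ ((Finset.coe_subset.2 (C.erase_subset e)).trans hCE)
      (by rw [Finset.card_erase_of_mem he, hC]; rfl)).closure_eq]
    exact hCE he

end Matroid

namespace FinMatroid

variable {n : ℕ} (M : FinMatroid n)

lemma exchangeProperty_coe_bases :
    Matroid.ExchangeProperty fun X : Set (Fin n) => ∃ B ∈ M.bases, (B : Set (Fin n)) = X := by
  rintro _ _ ⟨B₁, hB₁, rfl⟩ ⟨B₂, hB₂, rfl⟩ x hx
  obtain ⟨y, hy, hB⟩ := M.exchange B₁ hB₁ B₂ hB₂ x (by simpa using hx)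
  exact ⟨y, by simpa using hy, _, hB, by simp⟩

def toMatroid : Matroid (Fin n) :=
  Matroid.ofIsBaseOfFinite Set.finite_univ (fun X => ∃ B ∈ M.bases, (B : Set (Fin n)) = X)
    (let ⟨B, hB⟩ := M.bases_nonempty; ⟨B, B, hB, rfl⟩) M.exchangeProperty_coe_bases
    fun _ _ => Set.subset_univ _

@[simp] lemma toMatroid_E : M.toMatroid.E = Set.univ := rfl

lemma indep_iff_toMatroid_indep {S : Finset (Fin n)} :
    Indep M.bases S ↔ M.toMatroid.Indep S := by
  rw [Matroid.indep_iff]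
  constructor
  · rintro ⟨B, hB, hSB⟩
    exact ⟨B, ⟨B, hB, rfl⟩, Finset.coe_subset.2 hSB⟩
  · rintro ⟨_, ⟨B, hB, rfl⟩, hSB⟩
    exact ⟨B, hB, Finset.coe_subset.1 hSB⟩

lemma isCircuit_iff_toMatroid_isCircuit {C : Finset (Fin n)} :
    IsCircuit M.bases C ↔ M.toMatroid.IsCircuit C := by
  rw [Matroid.isCircuit_iff_forall_ssubset, Matroid.Dep, ← indep_iff_toMatroid_indep,
    toMatroid_E, and_iff_left (Set.subset_univ _)]
  refine and_congr_right fun _ => ⟨fun h I hIC => ?_, fun h D hDC hDne => ?_⟩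
  · obtain ⟨D, rfl⟩ := (Set.toFinite I).exists_finset_coe
    exact (M.indep_iff_toMatroid_indep).1
      (h D (Finset.coe_subset.1 hIC.subset) (by rintro rfl; exact hIC.ne rfl))
  · exact (M.indep_iff_toMatroid_indep).2 (h (Finset.coe_ssubset.2 (hDC.ssubset_of_ne hDne)))

lemma isCyclic_toMatroid_iff {C : Finset (Fin n)} :
    M.toMatroid.IsCyclic C ↔ ∀ x ∈ C, ∃ D ⊆ C, IsCircuit M.bases D ∧ x ∈ D := by
  refine forall₂_congr fun x _ => ⟨?_, ?_⟩
  · rintro ⟨D, hDC, hD, hxD⟩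
    obtain ⟨D, rfl⟩ := (Set.toFinite D).exists_finset_coe
    exact ⟨D, Finset.coe_subset.1 hDC, M.isCircuit_iff_toMatroid_isCircuit.2 hD, hxD⟩
  · rintro ⟨D, hDC, hD, hxD⟩
    exact ⟨D, Finset.coe_subset.2 hDC, M.isCircuit_iff_toMatroid_isCircuit.1 hD, hxD⟩

lemma rk_eq_eRk_toMatroid (S : Finset (Fin n)) : (rk M S : ℕ∞) = M.toMatroid.eRk S := by
  refine le_antisymm ?_ ?_
  · obtain ⟨B, hB, hSB⟩ := M.bases.exists_mem_eq_sup M.bases_nonempty fun B => (S ∩ B).card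
    rw [rk, rkOf, hSB, ← Set.encard_coe_eq_coe_finsetCard]
    exact ((M.indep_iff_toMatroid_indep).1 ⟨B, hB, Finset.inter_subset_right⟩
      ).encard_le_eRk_of_subset (Finset.coe_subset.2 Finset.inter_subset_left)
  · obtain ⟨I, hI⟩ := M.toMatroid.exists_isBasis S (by simp)
    obtain ⟨_, ⟨B, hB, rfl⟩, hIB⟩ := hI.exists_isBase
    rw [hI.eRk_eq_encard, hIB, ← Finset.coe_inter, Set.encard_coe_eq_coe_finsetCard,
      Finset.inter_comm]
    exact_mod_cast Finset.le_sup (f := fun B => (S ∩ B).card) hB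

lemma rk_eq_rk_univ_iff_spanning (S : Finset (Fin n)) :
    rk M S = rk M Finset.univ ↔ M.toMatroid.Spanning S := by
  have hmono := M.toMatroid.eRk_mono (Set.subset_univ (S : Set (Fin n)))
  rw [Matroid.spanning_iff_eRk_le (by simp), ← Matroid.eRk_eq_eRank (Set.subset_univ _)]
  rw [← Finset.coe_univ, ← rk_eq_eRk_toMatroid, ← rk_eq_eRk_toMatroid, Nat.cast_le] at hmono ⊢
  omega

end FinMatroid

lemma Finset.exists_sup_id_eq_iff {α : Type*} [DecidableEq α] (P : Finset α → Prop)
    (C : Finset α) :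
    (∃ 𝒟 : Finset (Finset α), (∀ D ∈ 𝒟, P D) ∧ C = 𝒟.sup id) ↔
      ∀ x ∈ C, ∃ D ⊆ C, P D ∧ x ∈ D := by
  constructor
  · rintro ⟨𝒟, h𝒟, rfl⟩ x hx
    obtain ⟨D, hD, hxD⟩ := Finset.mem_sup.1 hx
    exact ⟨D, Finset.le_sup (f := id) hD, h𝒟 D hD, hxD⟩
  · intro h
    refine ⟨C.powerset.filter P, fun D hD => (Finset.mem_filter.1 hD).2, ?_⟩
    refine subset_antisymm (fun x hx => ?_) (Finset.sup_le fun D hD => ?_)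
    · obtain ⟨D, hDC, hD, hxD⟩ := h x hx
      exact Finset.mem_sup.2 ⟨D, Finset.mem_filter.2 ⟨Finset.mem_powerset.2 hDC, hD⟩, hxD⟩
    · exact Finset.mem_powerset.1 (Finset.mem_filter.1 hD).1

section Uniform

variable {n k : ℕ}

lemma indep_uniform_iff (hk : k ≤ n) {S : Finset (Fin n)} :
    Indep (Finset.univ.filter fun B : Finset (Fin n) => B.card = k) S ↔ S.card ≤ k := by
  constructor
  · rintro ⟨B, hB, hSB⟩
    exact (Finset.mem_filter.1 hB).2 ▸ Finset.card_le_card hSB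
  · intro hS
    obtain ⟨B, hSB, -, hB⟩ :=
      Finset.exists_subsuperset_card_eq (Finset.subset_univ S) hS (by simpa using hk)
    exact ⟨B, Finset.mem_filter.2 ⟨Finset.mem_univ B, hB⟩, hSB⟩

lemma isCircuit_uniform_iff (hk : k ≤ n) {C : Finset (Fin n)} :
    IsCircuit (Finset.univ.filter fun B : Finset (Fin n) => B.card = k) C ↔
      C.card = k + 1 := by
  simp only [IsCircuit, indep_uniform_iff hk, not_le]
  constructor
  · rintro ⟨hC, hmin⟩
    obtain ⟨D, hDC, hD⟩ := Finset.exists_subset_card_eq hC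
    have hDC_eq : D = C := by
      by_contra hne
      have := hmin D hDC hne
      omega
    rwa [← hDC_eq]
  · intro hC
    refine ⟨by omega, fun D hDC hne => ?_⟩
    have := Finset.card_lt_card (hDC.ssubset_of_ne hne)
    omega

end Uniform

theorem stmt0_general (n k r : ℕ)
    (M U : FinMatroid n)
    (hU : U.bases = Finset.univ.filter fun B : Finset (Fin n) => B.card = k)
    (hM : rk M Finset.univ = k - r) :
    IsQuotient M.bases U.bases ↔
      ∀ A : Finset (Fin n), A.card = k → rk M A = k - r := by
  have hkn : k ≤ n := by
    obtain ⟨B, hB⟩ := U.bases_nonempty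
    rw [hU, Finset.mem_filter] at hB
    simpa [hB.2] using B.card_le_univ
  have hquot : IsQuotient M.bases U.bases ↔
      ∀ C : Finset (Fin n), C.card = k + 1 → M.toMatroid.IsCyclic C := by
    simp only [IsQuotient, hU, isCircuit_uniform_iff hkn, Finset.exists_sup_id_eq_iff,
      M.isCyclic_toMatroid_iff]
  rw [hquot, ← hM]
  simpa [M.rk_eq_rk_univ_iff_spanning] using M.toMatroid.forall_isCyclic_iff_forall_spanning k

/-- A matroid `M` of rank `k - r` on `[n]` is a quotient of the uniform
matroid `U_{k,n}` iff every `k`-element subset has rank `k - r` in `M`. -/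
theorem stmt0 (n k r : ℕ) (hr : r ≤ k) (hk : k < n)
    (M U : FinMatroid n)
    (hU : U.bases = Finset.univ.filter fun B : Finset (Fin n) => B.card = k)
    (hM : rk M Finset.univ = k - r) :
    IsQuotient M.bases U.bases ↔
      ∀ A : Finset (Fin n), A.card = k → rk M A = k - r :=
  stmt0_general n k r M U hU hM
end

section
/- For a decorated permutation π on [n], the j-th column of the Grassmann matrix M^π is the indicator vector of the j-th term I^π_j of the Grassmann necklace of π. Consequently, every column of M^π has the same sum, equal to |I^π_1|. -/
open Finset

attribute [local instance] Classical.propDecidable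

section auxlemmas

variable {n : ℕ}

lemma sub_val' (a b : Fin n) :
    ((a - b : Fin n) : ℕ) = if b.val ≤ a.val then a.val - b.val else a.val + n - b.val := by
  have ha := a.isLt; have hb := b.isLt
  rw [Fin.sub_def]
  dsimp only
  split_ifs with h
  · have hx : n - b.val + a.val = (a.val - b.val) + n := by omega
    rw [hx, Nat.add_mod_right, Nat.mod_eq_of_lt (by omega)]
  · rw [Nat.mod_eq_of_lt (by omega)]; omega

lemma cpos_key (p i j : Fin n) :
    (cpos p j ≠ 0 ∧ cpos p j ≤ cpos p i) ↔ cpos j i < cpos j p := by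
  have := p.isLt; have := i.isLt; have := j.isLt
  simp only [cpos, sub_val']
  split_ifs <;> omega

lemma cpos_eq_zero_iff (a b : Fin n) : cpos a b = 0 ↔ b = a := by
  have := a.isLt; have := b.isLt
  rw [Fin.ext_iff]
  simp only [cpos, sub_val']
  split_ifs <;> omega

lemma sint_iff (π : DecoratedPerm n) (i j : Fin n) : j ∈ SInt π i ↔ i ∈ neck π j := by
  by_cases hc : π.col i = -1
  · simp [SInt, neck, hc]
  · unfold SInt neck cycIoc
    rw [if_neg hc]
    simp only [Finset.mem_filter, Finset.mem_univ, true_and, hc, or_false]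
    exact cpos_key _ _ _

/-- Successor in `Fin n`, defined explicitly to avoid numeral instances. -/
def finNext (j : Fin n) : Fin n := ⟨(j.val + 1) % n, Nat.mod_lt _ j.pos⟩

lemma neck_card_next (π : DecoratedPerm n) (j : Fin n) :
    (neck π (finNext j)).card = (neck π j).card := by
  have hn : 0 < n := j.pos
  have hJ := j.isLt
  set j1 : Fin n := finNext j with hj1def
  have hadd : (j1 : ℕ) = if j.val + 1 = n then 0 else j.val + 1 := by
    show (j.val + 1) % n = _
    split_ifs with h
    · rw [h, Nat.mod_self]
    · exact Nat.mod_eq_of_lt (by omega)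
  have hval : ∀ a b : Fin n, a ≠ b → a.val ≠ b.val := fun a b hab h => hab (Fin.val_injective h)
  by_cases hfix : π.perm j = j
  · -- fixed point: necks are equal
    have hsymmj : π.perm.symm j = j := π.perm.symm_apply_eq.mpr hfix.symm
    congr 1
    ext a
    simp only [neck, Finset.mem_filter, Finset.mem_univ, true_and]
    apply or_congr _ Iff.rfl
    by_cases haj : a = j
    · subst haj; rw [hsymmj]; simp
    · have hbj : π.perm.symm a ≠ j := fun h => haj (by
        have h2 := congrArg π.perm h
        rwa [Equiv.apply_symm_apply, hfix] at h2)
      have h1 := hval a j haj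
      have h2 := hval (π.perm.symm a) j hbj
      have := a.isLt; have := (π.perm.symm a).isLt
      simp only [cpos, sub_val', hadd]
      split_ifs <;> omega
  · -- j is not a fixed point
    obtain ⟨a0, ha0def⟩ : ∃ a0, a0 = π.perm j := ⟨_, rfl⟩
    have ha0j : a0 ≠ j := by rw [ha0def]; exact hfix
    have hsymma0 : π.perm.symm a0 = j := by rw [ha0def]; exact π.perm.symm_apply_apply j
    have hcolj : π.col j = 0 := (π.col_zero_iff j).mpr hfix
    have hcola0 : π.col a0 = 0 := by
      refine (π.col_zero_iff a0).mpr fun h => ha0j ?_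
      have h2 : π.perm.symm a0 = a0 := π.perm.symm_apply_eq.mpr h.symm
      rw [hsymma0] at h2; exact h2.symm
    have hsymmjj : π.perm.symm j ≠ j := fun h => hfix (by
      have h2 := congrArg π.perm h
      rw [Equiv.apply_symm_apply] at h2
      exact h2.symm)
    have h0 : cpos j j = 0 := (cpos_eq_zero_iff j j).mpr rfl
    have hjmem : j ∈ neck π j := by
      simp only [neck, Finset.mem_filter, Finset.mem_univ, true_and]
      left
      have h1 : cpos j (π.perm.symm j) ≠ 0 := fun h => hsymmjj ((cpos_eq_zero_iff j _).mp h)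
      omega
    have ha0notmem : a0 ∉ neck π j := by
      simp only [neck, Finset.mem_filter, Finset.mem_univ, true_and, hsymma0, hcola0]
      rw [h0]
      rintro (h | h)
      · omega
      · norm_num at h
    have hseteq : neck π j1 = insert a0 ((neck π j).erase j) := by
      ext a
      simp only [neck, Finset.mem_filter, Finset.mem_univ, true_and, Finset.mem_insert,
        Finset.mem_erase]
      by_cases haj : a = j
      · subst haj
        have hja0 : a ≠ a0 := fun h => ha0j h.symm
        simp only [hja0, false_or, ne_eq, not_true_eq_false, false_and, iff_false, hcolj]
        rintro (h | h)
        · have h1 := hval a a0 hja0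
          have := a.isLt; have := (π.perm.symm a).isLt
          have h2 := hval (π.perm.symm a) a hsymmjj
          simp only [cpos, sub_val', hadd] at h
          split_ifs at h <;> omega
        · norm_num at h
      · by_cases haa0 : a = a0
        · subst haa0
          simp only [haj, ne_eq, true_or, iff_true]
          left
          rw [hsymma0]
          have h1 := hval a j ha0j
          have := a.isLt
          simp only [cpos, sub_val', hadd]
          split_ifs <;> omega
        · simp only [haa0, false_or, haj, ne_eq, not_false_eq_true, true_and]
          apply or_congr _ Iff.rfl
          have hbj : π.perm.symm a ≠ j := fun h => haa0 (by
            rw [ha0def, ← h, Equiv.apply_symm_apply])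
          have h1 := hval a j haj
          have h2 := hval (π.perm.symm a) j hbj
          have := a.isLt; have := (π.perm.symm a).isLt
          simp only [cpos, sub_val', hadd]
          split_ifs <;> omega
    have ha0ne : a0 ∉ (neck π j).erase j := fun h => ha0notmem (Finset.mem_of_mem_erase h)
    rw [hseteq, Finset.card_insert_of_notMem ha0ne, Finset.card_erase_of_mem hjmem]
    have := Finset.card_pos.mpr ⟨j, hjmem⟩
    omega

lemma finNext_iterate (j : Fin n) (k : ℕ) :
    (finNext^[k] j : Fin n).val = (j.val + k) % n := by
  induction k with
  | zero => simp [Nat.mod_eq_of_lt j.isLt]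
  | succ k ih =>
    rw [Function.iterate_succ_apply']
    show ((finNext^[k] j).val + 1) % n = _
    rw [ih, Nat.mod_add_mod]
    congr 1

lemma neck_card_const (π : DecoratedPerm n) (j j' : Fin n) :
    (neck π j).card = (neck π j').card := by
  have hn : 0 < n := j.pos
  have hiter : ∀ (k : ℕ) (i : Fin n), (neck π (finNext^[k] i)).card = (neck π i).card := by
    intro k
    induction k with
    | zero => intro i; rfl
    | succ k ih =>
      intro i
      rw [Function.iterate_succ_apply', neck_card_next, ih]
  have hreach : finNext^[n + j'.val - j.val] j = j' := by
    have hj := j.isLt; have hj' := j'.isLt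
    apply Fin.val_injective
    rw [finNext_iterate]
    have h2 : j.val + (n + j'.val - j.val) = j'.val + n := by omega
    rw [h2, Nat.add_mod_right, Nat.mod_eq_of_lt hj']
  calc (neck π j).card = (neck π (finNext^[n + j'.val - j.val] j)).card := (hiter _ j).symm
    _ = (neck π j').card := by rw [hreach]

end auxlemmas

/-- The `j`-th column of the Grassmann matrix `M^π` (whose `i`-th row is the
indicator of the Grassmann interval `S^π_i`) is the indicator of the necklace term `I^π_j`;
consequently every column sum equals `|I^π_1|` (the rank of `π`). -/
theorem stmt2 (n : ℕ) (π : DecoratedPerm n) :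
    (∀ i j : Fin n, j ∈ SInt π i ↔ i ∈ neck π j) ∧
    (∀ j : Fin n, (Finset.univ.filter fun i => j ∈ SInt π i).card = drank π) := by
  constructor
  · intro i j
    exact sint_iff π i j
  · intro j
    have hn : 0 < n := j.pos
    have h1 : (Finset.univ.filter fun i => j ∈ SInt π i) = neck π j := by
      ext a
      simp [Finset.mem_filter, sint_iff]
    rw [h1]
    simp only [drank, dif_pos hn]
    exact neck_card_const π j ⟨0, hn⟩
end

section
/- Let σ and π be decorated permutations on [n]. Then I^σ_i ⊆ I^π_i for all i ∈ [n] if and only if S^σ_i ⊆ S^π_i for all i ∈ [n]. -/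
open Finset

attribute [local instance] Classical.propDecidable

lemma cpos_val {n : ℕ} (i a : Fin n) :
    cpos i a = if i.val ≤ a.val then a.val - i.val else n + a.val - i.val := by
  have hi := i.isLt
  have ha := a.isLt
  unfold cpos
  rw [Fin.sub_def]
  simp only
  split_ifs with hle
  · have h1 : n - i.val + a.val = (a.val - i.val) + n := by omega
    rw [h1, Nat.add_mod_right, Nat.mod_eq_of_lt (by omega)]
  · rw [Nat.mod_eq_of_lt (by omega)]
    omega

lemma cyc_iff {n : ℕ} (i a b : Fin n) (hab : a ≠ b) :
    cpos i a < cpos i b ↔ (cpos b i ≠ 0 ∧ cpos b i ≤ cpos b a) := by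
  have ha := a.isLt
  have hb := b.isLt
  have hi := i.isLt
  have hv : a.val ≠ b.val := fun h => hab (Fin.val_injective h)
  simp only [cpos_val]
  split_ifs <;> omega

lemma neck_SInt_duality {n : ℕ} (π : DecoratedPerm n) (i a : Fin n) :
    a ∈ neck π i ↔ i ∈ SInt π a := by
  have hiff := π.col_zero_iff a
  simp only [neck, SInt, cycIoc, Finset.mem_filter, Finset.mem_univ, true_and]
  rcases π.col_range a with h0 | h1 | hm
  · have hne : π.perm a ≠ a := hiff.mp h0
    have hba : π.perm.symm a ≠ a := by
      intro h
      apply hne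
      conv_lhs => rw [← h]
      exact π.perm.apply_symm_apply a
    rw [if_neg (by rw [h0]; decide)]
    simp only [Finset.mem_filter, Finset.mem_univ, true_and]
    rw [h0]
    constructor
    · rintro (h | h)
      · exact (cyc_iff i a _ (Ne.symm hba)).mp h
      · exact absurd h (by decide)
    · intro h
      exact Or.inl ((cyc_iff i a _ (Ne.symm hba)).mpr h)
  · have hfix : π.perm a = a := by
      by_contra hc
      have := hiff.mpr hc
      omega
    have hsym : π.perm.symm a = a := (Equiv.symm_apply_eq _).mpr hfix.symm
    rw [if_neg (by rw [h1]; decide)]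
    simp only [Finset.mem_filter, Finset.mem_univ, true_and, hsym]
    have hz : cpos a a = 0 := by simp [cpos_val]
    constructor
    · rintro (h | h)
      · omega
      · rw [h1] at h; exact absurd h (by decide)
    · intro ⟨h1', h2⟩
      rw [hz] at h2
      omega
  · rw [if_pos hm]
    simp only [Finset.mem_univ, iff_true]
    exact Or.inr hm

/-- Entrywise containment of Grassmann necklaces is equivalent to
entrywise containment of Grassmann intervals. -/
theorem stmt3 (n : ℕ) (σ π : DecoratedPerm n) :
    (∀ i, neck σ i ⊆ neck π i) ↔ ∀ i, SInt σ i ⊆ SInt π i := by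
  constructor
  · intro h i x hx
    rw [← neck_SInt_duality] at hx ⊢
    exact h x hx
  · intro h i x hx
    rw [neck_SInt_duality] at hx ⊢
    exact h x hx
end

section
/- Let M and N be positroids on [n] with rk(M) = rk(N) − 1, with decorated permutations σ and π and Grassmann necklaces I^σ and I^π respectively. Then I^σ_i ⊆ I^π_i for all i ∈ [n] if and only if there exists A ⊆ [n] such that σ = ρ_A(π). -/
open Finset

attribute [local instance] Classical.propDecidable

/-!
Necklaces and Grassmann intervals are dual: `a ∈ I_i ↔ i ∈ S_a`, where `S_a = (π⁻¹(a), a]`. So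
the necklace inclusions say `S^σ_a ⊆ S^π_a` for all `a`, and by double counting
`∑_a |S^π_a| = n · rk(π)`, so the rank condition says that the defects `|S^π_a| - |S^σ_a|` sum
to `n`. Let `T` be the set of positions where `σ` and `π` differ and `x(j) = σ⁻¹(π(j))`. The
defect at `π(j)` is the cyclic distance from `j` to `x(j)`, minus `n` if
`S^σ_{π(j)} ⊄ S^π_{π(j)}`, while the distances from the points of `T` to their cyclic successors
in `T` sum to exactly `n`. Given the inclusions, `x` maps each `j ∈ T` to another point of `T`,
at distance at least the successor gap, and these distances also sum to `n`: so `x` is the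
successor map of `T`, which says `σ = ρ_{[n] \ T}(π)`. Conversely, if `σ = ρ_A(π)` then `x` is
the successor map of `[n] \ A`, the distances sum to `n`, and no inclusion can fail.
-/

section CyclicPosition
variable {n : ℕ}

theorem cpos_eq (i a : Fin n) :
    cpos i a = if i.val ≤ a.val then a.val - i.val else a.val + n - i.val := by
  have hi := i.isLt
  have ha := a.isLt
  rw [cpos, Fin.val_sub]
  split_ifs with hia
  · rw [show n - i.val + a.val = a.val - i.val + n by omega, Nat.add_mod_right,
      Nat.mod_eq_of_lt (by omega)]
  · rw [Nat.mod_eq_of_lt (by omega)]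
    omega

theorem cpos_self (i : Fin n) : cpos i i = 0 := by
  have := i.isLt
  simp only [cpos_eq, le_refl, if_true, Nat.sub_self]

theorem cpos_lt (i a : Fin n) : cpos i a < n :=
  (a - i).isLt

theorem cpos_eq_zero {i a : Fin n} : cpos i a = 0 ↔ a = i := by
  have := i.isLt; have := a.isLt
  rw [cpos_eq, Fin.ext_iff]; split_ifs <;> omega

theorem cpos_left_inj {i a b : Fin n} : cpos i a = cpos i b ↔ a = b := by
  have := i.isLt; have := a.isLt; have := b.isLt
  rw [cpos_eq, cpos_eq, Fin.ext_iff]; split_ifs <;> omega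

theorem cpos_right_inj {a b i : Fin n} : cpos a i = cpos b i ↔ a = b := by
  have := i.isLt; have := a.isLt; have := b.isLt
  rw [cpos_eq, cpos_eq, Fin.ext_iff]; split_ifs <;> omega

theorem cpos_add_cpos {a b : Fin n} (h : a ≠ b) : cpos a b + cpos b a = n := by
  have := a.isLt; have := b.isLt; have := Fin.val_ne_of_ne h
  simp only [cpos_eq]; split_ifs <;> omega

theorem cpos_lt_cpos_iff {i a b : Fin n} : cpos i a < cpos i b ↔ cpos i a < cpos b a := by
  have := a.isLt; have := b.isLt; have := i.isLt
  simp only [cpos_eq]; split_ifs <;> omega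

theorem cpos_lt_cpos_comm {i j z : Fin n} (hij : i ≠ j) (hz : z ≠ j) :
    cpos j z < cpos j i ↔ cpos i j < cpos i z := by
  have := i.isLt; have := j.isLt; have := z.isLt
  have := Fin.val_ne_of_ne hij; have := Fin.val_ne_of_ne hz
  simp only [cpos_eq]; split_ifs <;> omega

theorem cpos_eq_sub_of_le {j x a : Fin n} (h : cpos x a ≤ cpos j a) :
    cpos j x = cpos j a - cpos x a := by
  have := a.isLt; have := j.isLt; have := x.isLt
  simp only [cpos_eq] at *; split_ifs at * <;> omega

theorem cpos_eq_sub_add_of_lt {j x a : Fin n} (h : cpos j a < cpos x a) :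
    cpos j x = cpos j a + n - cpos x a := by
  have := a.isLt; have := j.isLt; have := x.isLt
  simp only [cpos_eq] at *; split_ifs at * <;> omega

theorem cpos_lt_of_cpos_lt {j z y : Fin n} (hz : z ≠ j) (h : cpos j z < cpos j y) :
    cpos z y < cpos j y := by
  have := j.isLt; have := z.isLt; have := y.isLt; have := Fin.val_ne_of_ne hz
  simp only [cpos_eq] at *; split_ifs at * <;> omega

theorem cpos_succ [NeZero n] {i a : Fin n} (h : a ≠ i) : cpos (i + 1) a + 1 = cpos i a := by
  rw [cpos, cpos, sub_add_eq_sub_sub, Fin.val_sub_one_of_ne_zero (by rwa [sub_ne_zero])]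
  have : ((a - i : Fin n) : ℕ) ≠ 0 := by rwa [Ne, Fin.val_eq_zero_iff, sub_eq_zero]
  omega

theorem cpos_succ_self [NeZero n] (i : Fin n) : cpos (i + 1) i = n - 1 := by
  rw [cpos, sub_add_cancel_left, Fin.val_neg, Fin.val_one']
  rcases Nat.lt_or_ge 1 n with h | h
  · simp [Nat.mod_eq_of_lt h]; omega
  · interval_cases n <;> simp

end CyclicPosition

section CyclicInterval
variable {n : ℕ}

theorem mem_cycIoc {a b x : Fin n} : x ∈ cycIoc a b ↔ x ≠ a ∧ cpos a x ≤ cpos a b := by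
  simp [cycIoc, cpos_eq_zero]

theorem mem_cycIoc_iff_cpos_lt {a b x : Fin n} : x ∈ cycIoc a b ↔ cpos x b < cpos a b := by
  have := a.isLt; have := b.isLt; have := x.isLt
  rw [cycIoc, mem_filter]
  simp only [mem_univ, true_and, cpos_eq]
  split_ifs <;> omega

theorem card_cycIoc (a b : Fin n) : (cycIoc a b).card = cpos a b := by
  have := NeZero.of_pos a.pos
  have h : cycIoc a b = (Ioc 0 (b - a)).map (Equiv.addRight a).toEmbedding := by
    ext x
    simp only [mem_cycIoc, mem_map_equiv, mem_Ioc, Equiv.addRight_symm, Equiv.coe_addRight,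
      ← sub_eq_add_neg, cpos, Fin.le_iff_val_le_val, Fin.pos_iff_ne_zero, ne_eq, sub_eq_zero]
  rw [h, card_map, Fin.card_Ioc, cpos]
  simp

theorem cycIoc_subset_cycIoc_iff {x y b : Fin n} :
    cycIoc x b ⊆ cycIoc y b ↔ cpos x b ≤ cpos y b := by
  refine ⟨fun h => ?_, fun h z hz => ?_⟩
  · by_contra hlt
    have := mem_cycIoc_iff_cpos_lt.1 (h (mem_cycIoc_iff_cpos_lt.2 (not_le.1 hlt)))
    omega
  · rw [mem_cycIoc_iff_cpos_lt] at hz ⊢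
    omega

theorem disjoint_cycIoc_swap (a b : Fin n) : Disjoint (cycIoc a b) (cycIoc b a) := by
  rw [disjoint_left]
  intro z hab hba
  rw [mem_cycIoc_iff_cpos_lt] at hab hba
  have := a.isLt; have := b.isLt; have := z.isLt
  simp only [cpos_eq] at *; split_ifs at * <;> omega

end CyclicInterval

section CyclicSuccessor
variable {n : ℕ} {T : Finset (Fin n)}

def IsCycSucc (T : Finset (Fin n)) (j y : Fin n) : Prop :=
  y ∈ T.erase j ∧ ∀ z ∈ T.erase j, cpos j y ≤ cpos j z

/-- `j` is the last element of `T` in the cyclic order starting at `i`: the cyclic predecessor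
of `i` in `T`, or `i` itself when `T = {i}`. -/
def IsCycPred (T : Finset (Fin n)) (i j : Fin n) : Prop :=
  j ∈ T ∧ ∀ z ∈ T, cpos i z ≤ cpos i j

theorem IsCycSucc.unique {j y y' : Fin n} (h : IsCycSucc T j y) (h' : IsCycSucc T j y') :
    y = y' :=
  cpos_left_inj.1 (le_antisymm (h.2 y' h'.1) (h'.2 y h.1))

theorem IsCycPred.unique {i j j' : Fin n} (h : IsCycPred T i j) (h' : IsCycPred T i j') :
    j = j' :=
  cpos_left_inj.1 (le_antisymm (h'.2 j h.1) (h.2 j' h'.1))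

theorem exists_isCycSucc {j : Fin n} (h : (T.erase j).Nonempty) : ∃ y, IsCycSucc T j y :=
  T.erase j |>.exists_min_image (cpos j) h

theorem exists_isCycPred (h : T.Nonempty) (i : Fin n) : ∃ j, IsCycPred T i j :=
  T.exists_max_image (cpos i) h

theorem IsCycPred.ne {i j z : Fin n} (h : IsCycPred T i j) (hz : z ∈ T) (hzi : z ≠ i) :
    j ≠ i := by
  rintro rfl
  have := h.2 z hz
  rw [cpos_self, Nat.le_zero, cpos_eq_zero] at this
  exact hzi this

theorem isCycSucc_iff_isCycPred {i j : Fin n} (hij : i ≠ j) (hi : i ∈ T) (hj : j ∈ T) :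
    IsCycSucc T j i ↔ IsCycPred T i j := by
  constructor
  · rintro ⟨-, hmin⟩
    refine ⟨hj, fun z hz => not_lt.1 fun hlt => ?_⟩
    have hzj : z ≠ j := by rintro rfl; exact lt_irrefl _ hlt
    exact absurd ((cpos_lt_cpos_comm hij hzj).2 hlt) (not_lt.2 (hmin z (mem_erase.2 ⟨hzj, hz⟩)))
  · rintro ⟨-, hmax⟩
    refine ⟨mem_erase.2 ⟨hij, hi⟩, fun z hz => not_lt.1 fun hlt => ?_⟩
    have hzj := (mem_erase.1 hz).1
    exact absurd ((cpos_lt_cpos_comm hij hzj).1 hlt) (not_lt.2 (hmax z (mem_erase.1 hz).2))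

theorem sum_cpos_of_isCycSucc {f : Fin n → Fin n} (hT : T.Nonempty)
    (hf : ∀ j ∈ T, IsCycSucc T j (f j)) : ∑ j ∈ T, cpos j (f j) = n := by
  have hdisj : (T : Set (Fin n)).PairwiseDisjoint fun j => cycIoc j (f j) := by
    intro x hx y hy hxy
    have hxy' : cycIoc x (f x) ⊆ cycIoc x y := fun z hz => by
      rw [mem_cycIoc] at hz ⊢
      exact ⟨hz.1, hz.2.trans ((hf x hx).2 y (mem_erase.2 ⟨hxy.symm, hy⟩))⟩
    have hyx : cycIoc y (f y) ⊆ cycIoc y x := fun z hz => by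
      rw [mem_cycIoc] at hz ⊢
      exact ⟨hz.1, hz.2.trans ((hf y hy).2 x (mem_erase.2 ⟨hxy, hx⟩))⟩
    exact (disjoint_cycIoc_swap x y).mono hxy' hyx
  have hcover : T.biUnion (fun j => cycIoc j (f j)) = univ := by
    refine eq_univ_of_forall fun z => mem_biUnion.2 ?_
    -- the last element of `T` strictly before `z` has its gap covering `z`
    have hne : (T.erase z).Nonempty := by
      obtain ⟨j, hj⟩ := hT
      by_cases hjz : j = z
      · exact ⟨f j, hjz ▸ (hf j hj).1⟩
      · exact ⟨j, mem_erase.2 ⟨hjz, hj⟩⟩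
    obtain ⟨j, hj, hjmin⟩ := (T.erase z).exists_min_image (fun j => cpos j z) hne
    obtain ⟨hjz, hjT⟩ := mem_erase.1 hj
    obtain ⟨hfj, -⟩ := hf j hjT
    obtain ⟨hfjj, hfjT⟩ := mem_erase.1 hfj
    refine ⟨j, hjT, mem_cycIoc.2 ⟨hjz.symm, not_lt.1 fun hlt => ?_⟩⟩
    have hfjz : f j ≠ z := by rintro rfl; exact lt_irrefl _ hlt
    have := hjmin (f j) (mem_erase.2 ⟨hfjz, hfjT⟩)
    exact absurd (cpos_lt_of_cpos_lt hfjj hlt) (not_lt.2 this)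
  calc ∑ j ∈ T, cpos j (f j) = ∑ j ∈ T, (cycIoc j (f j)).card := by simp only [card_cycIoc]
    _ = (univ : Finset (Fin n)).card := by rw [← card_biUnion hdisj, hcover]
    _ = n := by rw [card_univ, Fintype.card_fin]

theorem isCycSucc_of_sum_cpos_eq {x : Fin n → Fin n} (hx : ∀ j ∈ T, x j ∈ T.erase j)
    (hsum : ∑ j ∈ T, cpos j (x j) = n) : ∀ j ∈ T, IsCycSucc T j (x j) := by
  rcases T.eq_empty_or_nonempty with rfl | hT
  · simp
  choose! f hf using fun j (hj : j ∈ T) => exists_isCycSucc ⟨x j, hx j hj⟩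
  have hle : ∀ j ∈ T, cpos j (f j) ≤ cpos j (x j) := fun j hj => (hf j hj).2 _ (hx j hj)
  have heq : ∀ j ∈ T, cpos j (f j) = cpos j (x j) := by
    by_contra! ⟨j, hj, hne⟩
    have := sum_lt_sum hle ⟨j, hj, lt_of_le_of_ne (hle j hj) hne⟩
    rw [sum_cpos_of_isCycSucc hT hf, hsum] at this
    exact lt_irrefl _ this
  intro j hj
  rw [← cpos_left_inj.1 (heq j hj)]
  exact hf j hj

end CyclicSuccessor

theorem Equiv.apply_eq_of_forall_ne {α β : Type*} (e f : α ≃ β) {i : α}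
    (h : ∀ k ≠ i, e k = f k) : e i = f i := by
  by_contra hne
  have hk : f.symm (e i) ≠ i := fun hk => hne (by rw [← hk, f.apply_symm_apply, hk])
  have := h _ hk
  rw [f.apply_symm_apply] at this
  exact hk (e.injective this)

namespace DecoratedPerm
variable {n : ℕ} (π : DecoratedPerm n) {a : Fin n}

theorem apply_eq_of_col_ne_zero (h : π.col a ≠ 0) : π.perm a = a :=
  not_not.1 fun hne => h ((π.col_zero_iff a).2 hne)

theorem apply_eq_of_col_eq_neg_one (h : π.col a = -1) : π.perm a = a :=
  π.apply_eq_of_col_ne_zero (by rw [h]; decide)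

theorem col_eq_zero_of_apply_ne (h : π.perm a ≠ a) : π.col a = 0 :=
  (π.col_zero_iff a).2 h

theorem col_eq_one_of_apply_eq (hfix : π.perm a = a) (hne : π.col a ≠ -1) : π.col a = 1 := by
  rcases π.col_range a with h | h | h
  · exact absurd hfix ((π.col_zero_iff a).1 h)
  · exact h
  · exact absurd h hne

theorem col_eq_col_of_apply_eq {σ : DecoratedPerm n} (h : σ.perm a = π.perm a)
    (hσ : σ.col a ≠ -1) (hπ : π.col a ≠ -1) : σ.col a = π.col a := by
  by_cases hfix : π.perm a = a
  · rw [σ.col_eq_one_of_apply_eq (h.trans hfix) hσ, π.col_eq_one_of_apply_eq hfix hπ]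
  · rw [σ.col_eq_zero_of_apply_ne (h ▸ hfix), π.col_eq_zero_of_apply_ne hfix]

end DecoratedPerm

section GrassmannInterval
variable {n : ℕ} (π : DecoratedPerm n)

theorem sInt_of_col_eq_neg_one {a : Fin n} (h : π.col a = -1) : SInt π a = univ :=
  if_pos h

theorem sInt_of_col_ne_neg_one {a : Fin n} (h : π.col a ≠ -1) :
    SInt π a = cycIoc (π.perm.symm a) a :=
  if_neg h

theorem cycIoc_ne_univ (a b : Fin n) : cycIoc a b ≠ univ := fun h => by
  have := congrArg card h
  rw [card_cycIoc, card_univ, Fintype.card_fin] at this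
  exact (cpos_lt a b).ne this

theorem sInt_eq_univ_iff {a : Fin n} : SInt π a = univ ↔ π.col a = -1 := by
  refine ⟨fun h => not_not.1 fun hne => ?_, sInt_of_col_eq_neg_one π⟩
  rw [sInt_of_col_ne_neg_one π hne] at h
  exact cycIoc_ne_univ _ _ h

theorem sInt_subset_of_perm_eq {σ : DecoratedPerm n} {a : Fin n} (hperm : σ.perm = π.perm)
    (hcol : σ.col a = -1 → π.col a = -1) : SInt σ a ⊆ SInt π a := by
  by_cases hπ : π.col a = -1
  · exact sInt_of_col_eq_neg_one π hπ ▸ subset_univ _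
  · rw [sInt_of_col_ne_neg_one π hπ, sInt_of_col_ne_neg_one σ (mt hcol hπ), hperm]

theorem mem_neck_iff {i a : Fin n} : a ∈ neck π i ↔ i ∈ SInt π a := by
  rw [neck, mem_filter, SInt]
  by_cases hc : π.col a = -1
  · simp [hc]
  · simp only [hc, if_false, mem_univ, true_and, or_false, mem_cycIoc_iff_cpos_lt]
    exact cpos_lt_cpos_iff

theorem neck_subset_neck_iff {σ : DecoratedPerm n} :
    (∀ i, neck σ i ⊆ neck π i) ↔ ∀ a, SInt σ a ⊆ SInt π a := by
  simp only [subset_iff, mem_neck_iff]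
  exact forall_comm

end GrassmannInterval

section Necklace
variable {n : ℕ} (π : DecoratedPerm n)

theorem mem_sInt_succ_iff [NeZero n] {i a : Fin n} (h1 : a ≠ i) (h2 : π.perm.symm a ≠ i) :
    i + 1 ∈ SInt π a ↔ i ∈ SInt π a := by
  by_cases hc : π.col a = -1
  · simp [sInt_of_col_eq_neg_one π hc]
  · rw [sInt_of_col_ne_neg_one π hc, mem_cycIoc_iff_cpos_lt, mem_cycIoc_iff_cpos_lt]
    have h3 := cpos_succ h1
    have h4 : cpos (π.perm.symm a) a ≠ cpos i a := fun h => h2 (cpos_right_inj.1 h)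
    omega

theorem neck_succ_of_apply_eq [NeZero n] {i : Fin n} (hfix : π.perm i = i) :
    neck π (i + 1) = neck π i := by
  ext a
  rw [mem_neck_iff, mem_neck_iff]
  by_cases hai : a = i
  · subst hai
    by_cases hc : π.col a = -1
    · simp [sInt_of_col_eq_neg_one π hc]
    · simp [sInt_of_col_ne_neg_one π hc, π.perm.symm_apply_eq.2 hfix.symm, cycIoc, cpos_self]
  · exact mem_sInt_succ_iff π hai fun h => hai (by rw [← π.perm.apply_symm_apply a, h, hfix])

theorem neck_succ_of_apply_ne [NeZero n] {i : Fin n} (hp : π.perm i ≠ i) :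
    i ∈ neck π i ∧ π.perm i ∉ neck π i ∧
      neck π (i + 1) = insert (π.perm i) ((neck π i).erase i) := by
  have hci : π.col i ≠ -1 := by rw [π.col_eq_zero_of_apply_ne hp]; decide
  have hcpi : π.col (π.perm i) ≠ -1 := fun h =>
    hp (π.perm.injective (π.apply_eq_of_col_eq_neg_one h))
  have hsi : π.perm.symm i ≠ i := fun h => hp (π.perm.symm_apply_eq.1 h).symm
  refine ⟨?_, ?_, ?_⟩
  · rw [mem_neck_iff, sInt_of_col_ne_neg_one π hci, mem_cycIoc]
    exact ⟨fun h => hsi h.symm, le_rfl⟩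
  · rw [mem_neck_iff, sInt_of_col_ne_neg_one π hcpi, π.perm.symm_apply_apply, mem_cycIoc]
    exact fun h => h.1 rfl
  · ext a
    rw [mem_insert, mem_erase, mem_neck_iff, mem_neck_iff]
    by_cases hai : a = i
    · subst hai
      rw [sInt_of_col_ne_neg_one π hci, mem_cycIoc_iff_cpos_lt, cpos_succ_self]
      have := cpos_lt (π.perm.symm a) a
      simp only [hp.symm, ne_eq, not_true_eq_false, false_and, or_self, iff_false]
      omega
    by_cases hapi : a = π.perm i
    · subst hapi
      rw [sInt_of_col_ne_neg_one π hcpi, π.perm.symm_apply_apply, mem_cycIoc_iff_cpos_lt]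
      have := cpos_succ hp
      simp only [true_or, iff_true]
      omega
    · rw [mem_sInt_succ_iff π hai fun h => hapi (by rw [← h, π.perm.apply_symm_apply])]
      simp [hai, hapi]

theorem card_neck_succ [NeZero n] (i : Fin n) : (neck π (i + 1)).card = (neck π i).card := by
  by_cases hp : π.perm i = i
  · rw [neck_succ_of_apply_eq π hp]
  · obtain ⟨hi, hpi, heq⟩ := neck_succ_of_apply_ne π hp
    rw [heq, card_insert_of_notMem fun h => hpi (mem_of_mem_erase h), card_erase_of_mem hi,
      Nat.sub_add_cancel (card_pos.2 ⟨i, hi⟩)]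

theorem card_neck_eq_drank (i : Fin n) : (neck π i).card = drank π := by
  obtain ⟨m, rfl⟩ : ∃ m, n = m + 1 := Nat.exists_eq_succ_of_ne_zero i.pos.ne'
  rw [drank, dif_pos i.pos]
  induction i using Fin.induction with
  | zero => rfl
  | succ i ih => rw [← Fin.coeSucc_eq_succ, card_neck_succ, ih]

theorem sum_card_sInt : ∑ a, (SInt π a).card = n * drank π :=
  calc ∑ a, (SInt π a).card = ∑ a, ∑ i, if i ∈ SInt π a then 1 else 0 := by simp
    _ = ∑ i, ∑ a, if a ∈ neck π i then 1 else 0 := by rw [sum_comm]; simp only [mem_neck_iff]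
    _ = n * drank π := by simp [card_neck_eq_drank]

end Necklace

section Defect
variable {n : ℕ} {σ π : DecoratedPerm n}

def sIntDefect (π σ : DecoratedPerm n) (a : Fin n) : ℤ := (SInt π a).card - (SInt σ a).card

def agreeSet (π σ : DecoratedPerm n) : Finset (Fin n) :=
  univ.filter fun j => σ.perm j = π.perm j ∧ σ.col j = π.col j

theorem mem_agreeSet {j : Fin n} :
    j ∈ agreeSet π σ ↔ σ.perm j = π.perm j ∧ σ.col j = π.col j := by
  simp [agreeSet]

theorem sum_sIntDefect (hrk : drank σ + 1 = drank π) : ∑ a, sIntDefect π σ a = n := by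
  simp only [sIntDefect, sum_sub_distrib]
  rw [← Nat.cast_sum, ← Nat.cast_sum, sum_card_sInt, sum_card_sInt, ← hrk]
  push_cast
  ring

theorem sInt_apply_of_col_ne_neg_one {j : Fin n} (h : π.col (π.perm j) ≠ -1) :
    SInt π (π.perm j) = cycIoc j (π.perm j) := by
  rw [sInt_of_col_ne_neg_one π h, π.perm.symm_apply_apply]

theorem agree_iff_sInt_eq (j : Fin n) :
    σ.perm j = π.perm j ∧ σ.col j = π.col j ↔ SInt σ (π.perm j) = SInt π (π.perm j) := by
  by_cases hπ : π.col (π.perm j) = -1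
  · have hj : π.perm j = j := π.perm.injective (π.apply_eq_of_col_eq_neg_one hπ)
    rw [hj] at hπ ⊢
    rw [sInt_of_col_eq_neg_one π hπ, sInt_eq_univ_iff, hπ]
    exact ⟨And.right, fun h => ⟨σ.apply_eq_of_col_eq_neg_one h, h⟩⟩
  rw [sInt_apply_of_col_ne_neg_one hπ]
  constructor
  · rintro ⟨hperm, hcol⟩
    have hσ : σ.col (π.perm j) ≠ -1 := fun hc => by
      have hj : π.perm j = j :=
        σ.perm.injective ((σ.apply_eq_of_col_eq_neg_one hc).trans hperm.symm)
      rw [hj, ← hcol] at hπ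
      rw [hj] at hc
      exact hπ hc
    rw [sInt_of_col_ne_neg_one σ hσ, ← hperm, σ.perm.symm_apply_apply]
  · intro h
    have hσ' : σ.col (π.perm j) ≠ -1 := fun hc => by
      rw [sInt_of_col_eq_neg_one σ hc] at h
      exact cycIoc_ne_univ _ _ h.symm
    rw [sInt_of_col_ne_neg_one σ hσ'] at h
    have hx := cpos_right_inj.1 (by simpa only [card_cycIoc] using congrArg card h)
    have hperm : σ.perm j = π.perm j := (σ.perm.symm_apply_eq.1 hx).symm
    refine ⟨hperm, ?_⟩
    by_cases hfix : π.perm j = j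
    · rw [hfix] at hπ hσ'
      exact π.col_eq_col_of_apply_eq hperm hσ' hπ
    · rw [σ.col_eq_zero_of_apply_ne (hperm ▸ hfix), π.col_eq_zero_of_apply_ne hfix]

theorem col_ne_neg_one_of_symm_apply_ne {j : Fin n}
    (hcol : σ.col (π.perm j) = -1 → π.col (π.perm j) = -1) (hx : σ.perm.symm (π.perm j) ≠ j) :
    σ.col (π.perm j) ≠ -1 := fun hc => hx <| by
  have hj : π.perm j = j := π.perm.injective (π.apply_eq_of_col_eq_neg_one (hcol hc))
  rw [σ.perm.symm_apply_eq.2 (σ.apply_eq_of_col_eq_neg_one hc).symm, hj]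

theorem sIntDefect_apply {j : Fin n} (hσ : σ.col (π.perm j) ≠ -1)
    (hx : σ.perm.symm (π.perm j) ≠ j) :
    sIntDefect π σ (π.perm j) = cpos j (σ.perm.symm (π.perm j)) -
      if SInt σ (π.perm j) ⊆ SInt π (π.perm j) then 0 else (n : ℤ) := by
  rw [sIntDefect, sInt_of_col_ne_neg_one σ hσ, card_cycIoc]
  generalize σ.perm.symm (π.perm j) = x at hx ⊢
  by_cases hπ : π.col (π.perm j) = -1
  · have hj : π.perm j = j := π.perm.injective (π.apply_eq_of_col_eq_neg_one hπ)
    rw [sInt_of_col_eq_neg_one π hπ, if_pos (subset_univ _), card_univ, Fintype.card_fin, hj]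
    have := cpos_add_cpos hx
    omega
  · rw [sInt_apply_of_col_ne_neg_one hπ, card_cycIoc]
    split_ifs with hle <;> rw [cycIoc_subset_cycIoc_iff] at hle
    · rw [cpos_eq_sub_of_le hle]
      omega
    · rw [cpos_eq_sub_add_of_lt (not_le.1 hle)]
      have := cpos_lt x (π.perm j)
      omega

theorem sum_compl_sIntDefect {A : Finset (Fin n)}
    (hA : ∀ j ∈ A, σ.perm j = π.perm j ∧ σ.col j = π.col j) :
    ∑ j ∈ Aᶜ, sIntDefect π σ (π.perm j) = ∑ a, sIntDefect π σ a := by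
  rw [← Equiv.sum_comp π.perm]
  refine sum_subset (subset_univ _) fun j _ hj => ?_
  rw [sIntDefect, ← (agree_iff_sInt_eq j).1 (hA j (by simpa using hj)), sub_self]

end Defect

section SubsetToShift
variable {n : ℕ} {σ π : DecoratedPerm n}

theorem col_eq_neg_one_of_sInt_subset {a : Fin n} (hsub : SInt σ a ⊆ SInt π a)
    (h : σ.col a = -1) : π.col a = -1 :=
  (sInt_eq_univ_iff π).1 (univ_subset_iff.1 (sInt_of_col_eq_neg_one σ h ▸ hsub))

theorem sIntDefect_nonneg {a : Fin n} (hsub : SInt σ a ⊆ SInt π a) : 0 ≤ sIntDefect π σ a :=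
  sub_nonneg.2 (by exact_mod_cast card_le_card hsub)

theorem mem_agreeSet_of_sIntDefect_eq_zero {j : Fin n}
    (hsub : SInt σ (π.perm j) ⊆ SInt π (π.perm j)) (h : sIntDefect π σ (π.perm j) = 0) :
    j ∈ agreeSet π σ := by
  refine mem_agreeSet.2 ((agree_iff_sInt_eq j).2 (eq_of_subset_of_card_le hsub ?_))
  rw [sIntDefect, sub_eq_zero] at h
  exact_mod_cast h.le

theorem sIntDefect_eq_cpos (hsub : ∀ a, SInt σ a ⊆ SInt π a) {j : Fin n}
    (hx : σ.perm.symm (π.perm j) ≠ j) :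
    sIntDefect π σ (π.perm j) = cpos j (σ.perm.symm (π.perm j)) := by
  have hσ := col_ne_neg_one_of_symm_apply_ne (col_eq_neg_one_of_sInt_subset (hsub _)) hx
  rw [sIntDefect_apply hσ hx, if_pos (hsub _), sub_zero]

theorem symm_apply_ne_of_nontrivial (hsub : ∀ a, SInt σ a ⊆ SInt π a)
    (hsum : ∑ a, sIntDefect π σ a = n) (hT : (agreeSet π σ)ᶜ.Nontrivial) {j : Fin n}
    (hj : j ∈ (agreeSet π σ)ᶜ) : σ.perm.symm (π.perm j) ≠ j := by
  intro hx
  have hperm : σ.perm j = π.perm j := (σ.perm.symm_apply_eq.1 hx).symm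
  have hnagree := mem_compl.1 hj
  rw [mem_agreeSet] at hnagree
  -- otherwise `j` is a coloop of `π` and a loop of `σ`, whose defect `n` exhausts the total
  have hσ : σ.col j ≠ -1 := fun h =>
    hnagree ⟨hperm, by rw [h, col_eq_neg_one_of_sInt_subset (hsub j) h]⟩
  have hπ : π.col j = -1 := by
    by_contra hπ
    exact hnagree ⟨hperm, π.col_eq_col_of_apply_eq hperm hσ hπ⟩
  have hfix : π.perm j = j := π.apply_eq_of_col_eq_neg_one hπ
  have hn : sIntDefect π σ (π.perm j) = n := by
    rw [hfix, sIntDefect, sInt_of_col_eq_neg_one π hπ, sInt_of_col_ne_neg_one σ hσ,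
      σ.perm.symm_apply_eq.2 (hperm.trans hfix).symm, card_univ, Fintype.card_fin,
      card_cycIoc, cpos_self]
    simp
  obtain ⟨k, hk, hkj⟩ := hT.exists_ne j
  have htotal := sum_compl_sIntDefect (A := agreeSet π σ) fun _ h => mem_agreeSet.1 h
  rw [hsum, ← add_sum_erase _ _ hj, hn, add_eq_left] at htotal
  have hzero := (sum_eq_zero_iff_of_nonneg fun z _ => sIntDefect_nonneg (hsub _)).1 htotal k
    (mem_erase.2 ⟨hkj, hk⟩)
  exact mem_compl.1 hk (mem_agreeSet_of_sIntDefect_eq_zero (hsub _) hzero)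

theorem exists_isCycPred_of_sInt_subset (hsub : ∀ a, SInt σ a ⊆ SInt π a)
    (hsum : ∑ a, sIntDefect π σ a = n) {i : Fin n} (hi : i ∈ (agreeSet π σ)ᶜ) :
    ∃ j, IsCycPred (agreeSet π σ)ᶜ i j ∧ σ.perm i = π.perm j := by
  set T := (agreeSet π σ)ᶜ
  rcases eq_singleton_or_nontrivial hi with hT | hT
  · refine ⟨i, ⟨hi, fun z hz => by rw [hT, mem_singleton] at hz; rw [hz]⟩, ?_⟩
    refine Equiv.apply_eq_of_forall_ne _ _ fun k hk => (mem_agreeSet.1 ?_).1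
    by_contra hkA
    exact hk (mem_singleton.1 (hT ▸ mem_compl.2 hkA))
  set x := fun j => σ.perm.symm (π.perm j)
  have hxne : ∀ j ∈ T, x j ≠ j := fun j hj => symm_apply_ne_of_nontrivial hsub hsum hT hj
  have hxT : ∀ j ∈ T, x j ∈ T.erase j := fun j hj => by
    refine mem_erase.2 ⟨hxne j hj, mem_compl.2 fun hxA => hxne j hj ?_⟩
    exact π.perm.injective ((mem_agreeSet.1 hxA).1.symm.trans (σ.perm.apply_symm_apply _))
  have hsumx : ∑ j ∈ T, cpos j (x j) = n := by
    have := sum_compl_sIntDefect (A := agreeSet π σ) fun _ h => mem_agreeSet.1 h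
    rw [hsum, sum_congr rfl fun j hj => sIntDefect_eq_cpos hsub (hxne j hj)] at this
    exact_mod_cast this
  have hsucc := isCycSucc_of_sum_cpos_eq hxT hsumx
  obtain ⟨j, hj⟩ := exists_isCycPred hT.nonempty i
  obtain ⟨k, hk, hki⟩ := hT.exists_ne i
  have hij : IsCycSucc T j i := (isCycSucc_iff_isCycPred (hj.ne hk hki).symm hi hj.1).2 hj
  refine ⟨j, hj, ?_⟩
  rw [← (hsucc j hj.1).unique hij]
  exact σ.perm.apply_symm_apply _

theorem isCyclicShift_agreeSet (hsub : ∀ a, SInt σ a ⊆ SInt π a)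
    (hsum : ∑ a, sIntDefect π σ a = n) : IsCyclicShift π σ (agreeSet π σ) := by
  refine ⟨fun i hi => mem_agreeSet.1 hi, fun i hi => ?_, fun i hi => ?_⟩
  · obtain ⟨j, ⟨hj, hmax⟩, hperm⟩ :=
      exists_isCycPred_of_sInt_subset hsub hsum (mem_compl.2 hi)
    exact ⟨j, mem_compl.1 hj, fun j' hj' => hmax j' (mem_compl.2 hj'), hperm⟩
  · split_ifs with hfix
    · refine σ.col_eq_one_of_apply_eq hfix fun hσ => hi (mem_agreeSet.2 ?_)
      have hπ := col_eq_neg_one_of_sInt_subset (hsub i) hσ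
      rw [hfix, π.apply_eq_of_col_eq_neg_one hπ, hσ, hπ]
      exact ⟨rfl, rfl⟩
    · exact σ.col_eq_zero_of_apply_ne hfix

end SubsetToShift

namespace IsCyclicShift
variable {n : ℕ} {σ π : DecoratedPerm n} {A : Finset (Fin n)}

theorem col_eq_neg_one (h : IsCyclicShift π σ A) {a : Fin n} (ha : σ.col a = -1) :
    π.col a = -1 := by
  by_cases hA : a ∈ A
  · rw [← (h.1 a hA).2, ha]
  · have := h.2.2 a hA
    split_ifs at this <;> rw [ha] at this <;> norm_num at this

theorem perm_eq (h : IsCyclicShift π σ A)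
    (hT : ((Aᶜ : Finset (Fin n)) : Set (Fin n)).Subsingleton) : σ.perm = π.perm := by
  ext i : 1
  by_cases hi : i ∈ A
  · exact (h.1 i hi).1
  · obtain ⟨j, hj, -, hperm⟩ := h.2.1 i hi
    rw [hperm, hT (mem_coe.2 (mem_compl.2 hj)) (mem_coe.2 (mem_compl.2 hi))]

theorem isCycSucc (h : IsCyclicShift π σ A) (hT : Aᶜ.Nontrivial) {j : Fin n} (hj : j ∈ Aᶜ) :
    IsCycSucc Aᶜ j (σ.perm.symm (π.perm j)) := by
  obtain ⟨k, hk, hkj⟩ := hT.exists_ne j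
  obtain ⟨s, hs⟩ := exists_isCycSucc (T := Aᶜ) ⟨k, mem_erase.2 ⟨hkj, hk⟩⟩
  obtain ⟨hsj, hsT⟩ := mem_erase.1 hs.1
  obtain ⟨j', hj'A, hmax, hperm⟩ := h.2.1 s (mem_compl.1 hsT)
  have hpred : IsCycPred Aᶜ s j' := ⟨mem_compl.2 hj'A, fun z hz => hmax z (mem_compl.1 hz)⟩
  have hj' : j = j' := ((isCycSucc_iff_isCycPred hsj hsT hj).1 hs).unique hpred
  rwa [σ.perm.symm_apply_eq.2 (by rw [hperm, hj'])]

theorem sInt_subset (h : IsCyclicShift π σ A) (hsum : ∑ a, sIntDefect π σ a = n) (a : Fin n) :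
    SInt σ a ⊆ SInt π a := by
  by_cases hT : Aᶜ.Nontrivial
  swap
  · exact sInt_subset_of_perm_eq π (h.perm_eq (Set.not_nontrivial_iff.1 hT)) h.col_eq_neg_one
  set x := fun j => σ.perm.symm (π.perm j)
  have hx : ∀ j ∈ Aᶜ, IsCycSucc Aᶜ j (x j) := fun j hj => h.isCycSucc hT hj
  have hxne : ∀ j ∈ Aᶜ, x j ≠ j := fun j hj => (mem_erase.1 (hx j hj).1).1
  have hsumx : ∑ j ∈ Aᶜ, (cpos j (x j) : ℤ) = n := by
    exact_mod_cast sum_cpos_of_isCycSucc hT.nonempty hx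
  -- each defect is `cpos j (x j)`, less `n` when the inclusion fails; the gaps already sum to `n`
  have hbad : ∑ j ∈ Aᶜ, (if SInt σ (π.perm j) ⊆ SInt π (π.perm j) then 0 else (n : ℤ)) = 0 := by
    have htotal := sum_compl_sIntDefect h.1
    rw [hsum, sum_congr rfl fun j hj => sIntDefect_apply
      (col_ne_neg_one_of_symm_apply_ne h.col_eq_neg_one (hxne j hj)) (hxne j hj),
      sum_sub_distrib, hsumx] at htotal
    linarith
  obtain ⟨j, rfl⟩ := π.perm.surjective a
  by_cases hj : j ∈ A
  · exact ((agree_iff_sInt_eq j).1 (h.1 j hj)).subset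
  have hzero := (sum_eq_zero_iff_of_nonneg fun j _ => by positivity).1 hbad j (mem_compl.2 hj)
  by_contra hfail
  rw [if_neg hfail] at hzero
  exact j.pos.ne' (by exact_mod_cast hzero)

end IsCyclicShift

/-- For positroids given by decorated permutations `σ`, `π` with
`rk(σ) = rk(π) - 1`, the necklaces satisfy `I^σ_i ⊆ I^π_i` for all `i` iff `σ = ρ_A(π)`
for some `A ⊆ [n]`. -/
theorem stmt6 (n : ℕ) (σ π : DecoratedPerm n) (hrk : drank σ + 1 = drank π) :
    (∀ i, neck σ i ⊆ neck π i) ↔ ∃ A : Finset (Fin n), IsCyclicShift π σ A := by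
  have hsum := sum_sIntDefect hrk
  rw [neck_subset_neck_iff]
  exact ⟨fun hsub => ⟨_, isCyclicShift_agreeSet hsub hsum⟩, fun ⟨_, h⟩ => h.sInt_subset hsum⟩
end
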